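/- arXiv:2110.15504 — 2 statements merged into one kernel-verified Lean document; each statement's English description precedes it below -/
import Mathlib

section
/- For any probability measure μ on the unit sphere S of an n-dimensional real inner product space, if x and y are independent random vectors each distributed according to μ, then E[⟨x,y⟩²] ≥ 1/n. -/
/-!
Let `M i j = 𝔼[xᵢ xⱼ]` be the second-moment matrix of `μ`. Expanding the square and integrating
in `y` and then in `x` gives `𝔼⟪x, y⟫² = ∑ᵢⱼ M i j²`, while `tr M = 𝔼‖x‖² = 1` on the sphere.
Cauchy–Schwarz on the diagonal then gives `1 = (tr M)² ≤ n ∑ᵢ M i i² ≤ n ∑ᵢⱼ M i j²`.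
-/

open MeasureTheory Finset
open scoped InnerProductSpace

variable {ι : Type*} [Fintype ι]

lemma Matrix.sq_trace_le_card_mul_sum_sq (A : Matrix ι ι ℝ) :
    A.trace ^ 2 ≤ Fintype.card ι * ∑ i, ∑ j, A i j ^ 2 :=
  calc A.trace ^ 2 ≤ Fintype.card ι * ∑ i, A i i ^ 2 := sq_sum_le_card_mul_sum_sq
    _ ≤ Fintype.card ι * ∑ i, ∑ j, A i j ^ 2 := by
      gcongr with i
      exact single_le_sum (f := fun j => A i j ^ 2) (fun j _ => sq_nonneg _) (mem_univ i)

lemma EuclideanSpace.real_inner_sq_eq_sum_sum (x y : EuclideanSpace ℝ ι) :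
    ⟪x, y⟫_ℝ ^ 2 = ∑ i, ∑ j, x i * x j * (y i * y j) := by
  rw [PiLp.inner_apply, sq, sum_mul_sum]
  refine sum_congr rfl fun i _ => sum_congr rfl fun j _ => ?_
  simp only [RCLike.inner_apply, conj_trivial]
  ring

section SecondMoment

variable (μ : Measure (EuclideanSpace ℝ ι))

noncomputable def secondMomentMatrix : Matrix ι ι ℝ :=
  Matrix.of fun i j => ∫ x, x i * x j ∂μ

variable {μ}

lemma integrable_apply_mul_apply (hμ : MemLp id 2 μ) (i j : ι) :
    Integrable (fun x : EuclideanSpace ℝ ι => x i * x j) μ := by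
  have hcoord (k : ι) : MemLp (fun x : EuclideanSpace ℝ ι => x k) 2 μ :=
    (EuclideanSpace.proj (𝕜 := ℝ) k).comp_memLp' hμ
  exact (hcoord i).integrable_mul (hcoord j)

lemma integral_real_inner_sq (hμ : MemLp id 2 μ) (x : EuclideanSpace ℝ ι) :
    ∫ y, ⟪x, y⟫_ℝ ^ 2 ∂μ = ∑ i, ∑ j, x i * x j * secondMomentMatrix μ i j := by
  simp_rw [EuclideanSpace.real_inner_sq_eq_sum_sum]
  have hint (i j : ι) := (integrable_apply_mul_apply hμ i j).const_mul (x i * x j)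
  rw [integral_finsetSum _ fun i _ => integrable_finsetSum _ fun j _ => hint i j]
  refine sum_congr rfl fun i _ => ?_
  rw [integral_finsetSum _ fun j _ => hint i j]
  exact sum_congr rfl fun j _ => integral_const_mul _ _

lemma integral_integral_real_inner_sq (hμ : MemLp id 2 μ) :
    ∫ x, ∫ y, ⟪x, y⟫_ℝ ^ 2 ∂μ ∂μ = ∑ i, ∑ j, secondMomentMatrix μ i j ^ 2 := by
  simp_rw [integral_real_inner_sq hμ]
  have hint (i j : ι) := (integrable_apply_mul_apply hμ i j).mul_const (secondMomentMatrix μ i j)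
  rw [integral_finsetSum _ fun i _ => integrable_finsetSum _ fun j _ => hint i j]
  refine sum_congr rfl fun i _ => ?_
  rw [integral_finsetSum _ fun j _ => hint i j]
  exact sum_congr rfl fun j _ => by rw [integral_mul_const, sq]; rfl

lemma trace_secondMomentMatrix (hμ : MemLp id 2 μ) :
    (secondMomentMatrix μ).trace = ∫ x, ‖x‖ ^ 2 ∂μ := by
  simp_rw [EuclideanSpace.real_norm_sq_eq, sq]
  rw [integral_finsetSum _ fun i _ => integrable_apply_mul_apply hμ i i]
  rfl

end SecondMoment

theorem expectation_sq_inner_ge_one_div_dim_general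
    {n : ℕ} (μ : Measure (EuclideanSpace ℝ (Fin n)))
    [IsProbabilityMeasure μ] (hsphere : ∀ᵐ x ∂μ, ‖x‖ = 1) :
    (1 : ℝ) / n ≤ ∫ x, (∫ y, ⟪x, y⟫_ℝ ^ 2 ∂μ) ∂μ := by
  have hμ : MemLp id 2 μ :=
    .of_bound aestronglyMeasurable_id 1 (hsphere.mono fun x hx => hx.le)
  have htrace : (secondMomentMatrix μ).trace = 1 := by
    rw [trace_secondMomentMatrix hμ, integral_congr_ae (g := fun _ => 1)
      (hsphere.mono fun x hx => by simp [hx]), integral_const, probReal_univ, one_smul]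
  refine div_le_of_le_mul₀ n.cast_nonneg
    (integral_nonneg fun x => integral_nonneg fun y => sq_nonneg _) ?_
  calc (1 : ℝ) = (secondMomentMatrix μ).trace ^ 2 := by rw [htrace, one_pow]
    _ ≤ n * ∑ i, ∑ j, secondMomentMatrix μ i j ^ 2 := by
      simpa using (secondMomentMatrix μ).sq_trace_le_card_mul_sum_sq
    _ = _ := by rw [integral_integral_real_inner_sq hμ, mul_comm]

theorem expectation_sq_inner_ge_one_div_dim
    {n : ℕ} (hn : 0 < n) (μ : Measure (EuclideanSpace ℝ (Fin n)))
    [IsProbabilityMeasure μ] (hsphere : ∀ᵐ x ∂μ, ‖x‖ = 1) :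
    (1 : ℝ) / n ≤ ∫ x, (∫ y, ⟪x, y⟫_ℝ ^ 2 ∂μ) ∂μ :=
  expectation_sq_inner_ge_one_div_dim_general μ hsphere
end

section
/- Let n ≥ 2 and let x ∈ ℝⁿ be a nonzero vector whose coordinates sum to zero. Then ∑_{σ ∈ Sₙ} ⟨x, σx⟩² = n!·‖x‖⁴/(n−1), equivalently ∑_{σ∈Sₙ} cos²(x, σx) = n!/(n−1). -/
/-!
Expanding the square, `∑ σ, ⟪x, σ x⟫ ^ 2 = ∑ i j, x i * x j * K i j` where
`K i j = ∑ σ, x (σ i) * x (σ j)`. Since `Sₙ` acts 2-transitively, `K` takes one value `d` on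
the diagonal and one value `c` off it, so the sum is `(d - c) * ‖x‖ ^ 2` because
`∑ i, x i = 0`.
The trace of `K` gives `n * d = n! * ‖x‖ ^ 2`, and its row sums vanish, `d + (n - 1) * c = 0`;
together `(n - 1) * (d - c) = n! * ‖x‖ ^ 2`.
-/

open scoped InnerProductSpace

variable {ι R : Type*} [Fintype ι] [DecidableEq ι] [CommRing R]

namespace Fintype

theorem sum_sum_mul_mul_ite (x : ι → R) (d c : R) :
    ∑ i, ∑ j, x i * x j * (if i = j then d else c) =
      (d - c) * ∑ i, x i ^ 2 + c * (∑ i, x i) ^ 2 := by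
  calc _ = ∑ i, ∑ j, (c * (x i * x j) + if i = j then (d - c) * x i ^ 2 else 0) := by
        refine Finset.sum_congr rfl fun i _ => Finset.sum_congr rfl fun j _ => ?_
        split_ifs with h
        · subst h; ring
        · ring
    _ = _ := by
        simp [Finset.sum_add_distrib, ← Finset.mul_sum, sq, Finset.sum_mul_sum]
        ring

theorem sum_ite_eq_card_mul_add (i : ι) (d c : R) :
    ∑ j, (if i = j then d else c) = Fintype.card ι * c + (d - c) := by
  have h : ∀ j : ι, (if i = j then d else c) = c + if i = j then d - c else 0 := by
    intro j; split_ifs <;> ring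
  simp [h, Finset.sum_add_distrib]

end Fintype

namespace Equiv.Perm

def correlation (x : ι → R) (i j : ι) : R :=
  ∑ σ : Perm ι, x (σ i) * x (σ j)

theorem correlation_apply_apply (x : ι → R) (τ : Perm ι) (i j : ι) :
    correlation x (τ i) (τ j) = correlation x i j :=
  Equiv.sum_comp (Equiv.mulRight τ) fun σ => x (σ i) * x (σ j)

theorem correlation_self (x : ι → R) (i i' : ι) : correlation x i i = correlation x i' i' := by
  simpa using correlation_apply_apply x (swap i' i) i' i'

theorem correlation_of_ne (x : ι → R) {i j i' j' : ι} (hij : i ≠ j) (hij' : i' ≠ j') :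
    correlation x i j = correlation x i' j' := by
  obtain ⟨τ, hτi, hτj⟩ :=
    MulAction.is_two_pretransitive_iff.mp (isMultiplyPretransitive ι 2) hij' hij
  rw [← hτi, ← hτj]
  exact correlation_apply_apply x τ i' j'

theorem exists_correlation_eq_ite [Nontrivial ι] (x : ι → R) :
    ∃ d c : R, ∀ i j, correlation x i j = if i = j then d else c := by
  obtain ⟨i₀, j₀, h⟩ := exists_pair_ne ι
  refine ⟨correlation x i₀ i₀, correlation x i₀ j₀, fun i j => ?_⟩
  split_ifs with hij
  · rw [hij, correlation_self x j i₀]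
  · exact correlation_of_ne x hij h

theorem sum_correlation_self (x : ι → R) :
    ∑ i, correlation x i i = (Fintype.card ι).factorial * ∑ i, x i ^ 2 := by
  simp only [correlation]
  rw [Finset.sum_comm]
  simp_rw [← sq]
  simp [Equiv.sum_comp _ fun i => x i ^ 2, Fintype.card_perm]

theorem sum_correlation_right (x : ι → R) (hx : ∑ i, x i = 0) (i : ι) :
    ∑ j, correlation x i j = 0 := by
  simp only [correlation]
  rw [Finset.sum_comm]
  simp [← Finset.mul_sum, Equiv.sum_comp, hx]

theorem sum_sq_sum_mul_apply (x : ι → R) :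
    ∑ σ : Perm ι, (∑ i, x i * x (σ i)) ^ 2 =
      ∑ i, ∑ j, x i * x j * correlation x i j := by
  simp_rw [correlation, Finset.mul_sum, sq, Finset.sum_mul_sum]
  rw [Finset.sum_comm]
  refine Finset.sum_congr rfl fun i _ => ?_
  rw [Finset.sum_comm]
  exact Finset.sum_congr rfl fun j _ => Finset.sum_congr rfl fun σ _ => by ring

end Equiv.Perm

theorem sum_over_permutations_sq_inner_general
    {n : ℕ} (hn : 2 ≤ n) (x : EuclideanSpace ℝ (Fin n))
    (hsum : ∑ i, x i = 0) :
    ∑ σ : Equiv.Perm (Fin n), ⟪x, (WithLp.toLp 2 (fun i => x (σ i)) : EuclideanSpace ℝ (Fin n))⟫_ℝ ^ 2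
      = (Nat.factorial n : ℝ) * ‖x‖ ^ 4 / ((n : ℝ) - 1) := by
  have : Nontrivial (Fin n) := Fin.nontrivial_iff_two_le.mpr hn
  obtain ⟨d, c, hK⟩ := Equiv.Perm.exists_correlation_eq_ite x.ofLp
  have hinner (σ : Equiv.Perm (Fin n)) :
      ⟪x, (WithLp.toLp 2 (fun i => x (σ i)) : EuclideanSpace ℝ (Fin n))⟫_ℝ =
        ∑ i, x i * x (σ i) := by
    simp [PiLp.inner_apply, mul_comm]
  have hsq : ∑ σ : Equiv.Perm (Fin n), (∑ i, x i * x (σ i)) ^ 2 = (d - c) * ‖x‖ ^ 2 := by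
    rw [Equiv.Perm.sum_sq_sum_mul_apply]
    simp_rw [hK, Fintype.sum_sum_mul_mul_ite, hsum, EuclideanSpace.real_norm_sq_eq]
    ring
  have hrow : n * c + (d - c) = 0 := by
    simpa [hK, Fintype.sum_ite_eq_card_mul_add] using
      Equiv.Perm.sum_correlation_right x.ofLp hsum ⟨0, by omega⟩
  have htrace : n * d = n.factorial * ‖x‖ ^ 2 := by
    simpa [hK, EuclideanSpace.real_norm_sq_eq] using Equiv.Perm.sum_correlation_self x.ofLp
  have hn1 : (n : ℝ) - 1 ≠ 0 := by
    have : (2 : ℝ) ≤ n := by exact_mod_cast hn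
    linarith
  simp_rw [hinner, hsq]
  rw [eq_div_iff hn1]
  linear_combination ‖x‖ ^ 2 * htrace - ‖x‖ ^ 2 * hrow

theorem sum_over_permutations_sq_inner
    {n : ℕ} (hn : 2 ≤ n) (x : EuclideanSpace ℝ (Fin n)) (hx : x ≠ 0)
    (hsum : ∑ i, x i = 0) :
    ∑ σ : Equiv.Perm (Fin n), ⟪x, (WithLp.toLp 2 (fun i => x (σ i)) : EuclideanSpace ℝ (Fin n))⟫_ℝ ^ 2
      = (Nat.factorial n : ℝ) * ‖x‖ ^ 4 / ((n : ℝ) - 1) :=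
  sum_over_permutations_sq_inner_general hn x hsum
end
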